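/- Let r be an even positive integer and Γ = {0,…,r−1}×{0,…,r−1}. Define C_r = {2cos(πj/r) : j ∈ ℤ, 0 ≤ j ≤ r} and C_Γ = {a + b : a, b ∈ C_r}. Then for every E ∈ (−4,4) with E ∉ C_Γ, the number of eigenvalues of Δ_{0,0}^Γ strictly below E, counted with multiplicity, is odd, and the number of eigenvalues of Δ_{π,π}^Γ strictly below E, counted with multiplicity, is even; in particular these two eigenvalue counts are different, and E is an eigenvalue of neither Δ_{0,0}^Γ nor Δ_{π,π}^Γ. -/

import Mathlib

/-!
For `θ ∈ {0, π}` the Floquet condition is satisfied by the plane waves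
`ψ(n, m) = ζ ^ (a n + b m)`, `ζ = e^{iπ/r}`, with `a, b < 2r` of the parity of `θ / π`. Their
matrix is the Kronecker square of a Vandermonde matrix, hence invertible, so the spectrum is
`2 cos (π a / r) + 2 cos (π b / r)` over these pairs, which lies in `C_Γ`. The eigenvalue-preserving
involution `(a, b) ↦ (2r - a, 2r - b)` has no fixed points for odd `a, b` when `r` is even; for even
`a, b` its fixed points are `a, b ∈ {0, r}`, with eigenvalues `4, 0, 0, -4`, of which one or three
lie below `E ∈ (-4, 4)`.
-/

/-- The Floquet extension: given phases θ, φ and ψ : ℂ^Γ (Γ = {0,…,p−1}×{0,…,q−1},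
identified with Fin p × Fin q), `floquetExt p q θ φ ψ` is the unique function
ψ̃ : ℤ² → ℂ extending ψ and satisfying ψ̃_{n+p,m} = e^{iθ} ψ̃_{n,m} and
ψ̃_{n,m+q} = e^{iφ} ψ̃_{n,m} for all n, m ∈ ℤ. -/
noncomputable def floquetExt (p q : ℕ) [NeZero p] [NeZero q] (θ φ : ℝ)
    (ψ : Fin p × Fin q → ℂ) (nm : ℤ × ℤ) : ℂ :=
  Complex.exp (Complex.I * ((θ : ℂ) * ((nm.1 / (p : ℤ) : ℤ) : ℂ) +
      (φ : ℂ) * ((nm.2 / (q : ℤ) : ℤ) : ℂ))) *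
    ψ (⟨(nm.1 % (p : ℤ)).toNat % p, Nat.mod_lt _ (Nat.pos_of_ne_zero (NeZero.ne p))⟩,
       ⟨(nm.2 % (q : ℤ)).toNat % q, Nat.mod_lt _ (Nat.pos_of_ne_zero (NeZero.ne q))⟩)

open Polynomial Finset Complex
open scoped Matrix Kronecker

theorem Finset.even_card_iff_even_card_filter_eq_self {α : Type*} [DecidableEq α]
    {s : Finset α} {f : α → α} (hf : Function.Involutive f) (hs : ∀ a ∈ s, f a ∈ s) :
    Even #s ↔ Even #{a ∈ s | f a = a} := by
  -- Off the fixed points, `f` pairs the elements up, so their count vanishes in `ZMod 2`.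
  have hfree : Even #{a ∈ s | ¬f a = a} := by
    rw [← ZMod.natCast_eq_zero_iff_even, card_eq_sum_ones, Nat.cast_sum, Nat.cast_one]
    refine sum_involution (fun a _ => f a) (fun _ _ => by decide)
      (fun a ha _ => (mem_filter.1 ha).2) (fun a ha => ?_) (fun a _ => hf a)
    obtain ⟨has, hfa⟩ := mem_filter.1 ha
    exact mem_filter.2 ⟨hs a has, by rwa [hf a, eq_comm]⟩
  rw [← card_filter_add_card_filter_not (fun a => f a = a), Nat.even_add]
  simp only [hfree, iff_true]

theorem Matrix.charpoly_eq_prod_of_mul_eq_mul_diagonal {R n : Type*} [CommRing R] [Fintype n]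
    [DecidableEq n] {M P : Matrix n n R} (hP : IsUnit P.det) {μ : n → R}
    (h : M * P = P * diagonal μ) : M.charpoly = ∏ i, (X - C (μ i)) := by
  have hM : M = P * (diagonal μ * P⁻¹) := by
    rw [← Matrix.mul_assoc, ← h, Matrix.mul_assoc, Matrix.mul_nonsing_inv _ hP, Matrix.mul_one]
  rw [hM, charpoly_mul_comm, Matrix.mul_assoc, Matrix.nonsing_inv_mul _ hP, Matrix.mul_one,
    charpoly_diagonal]

theorem Polynomial.roots_prod_X_sub_C_univ {R ι : Type*} [CommRing R] [IsDomain R] [Fintype ι]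
    (f : ι → R) : (∏ i, (X - C (f i))).roots = univ.val.map f := by
  rw [prod_eq_multiset_prod]
  simpa only [Multiset.map_map, Function.comp_def] using
    roots_multiset_prod_X_sub_C (univ.val.map f)

theorem card_filter_lt_eq_of_prod_X_sub_C_eq {ι κ : Type*} [Fintype ι] [Fintype κ]
    {f : ι → ℝ} {g : κ → ℝ}
    (h : ∏ i, (X - C (f i : ℂ)) = ∏ j, (X - C (g j : ℂ))) (E : ℝ) :
    #{i | f i < E} = #{j | g j < E} := by
  have hmap : univ.val.map f = univ.val.map g := by
    have hroots := congrArg roots h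
    rw [roots_prod_X_sub_C_univ, roots_prod_X_sub_C_univ] at hroots
    apply Multiset.map_injective Complex.ofReal_injective
    rw [Multiset.map_map, Multiset.map_map]
    exact hroots
  simpa only [Multiset.countP_map, card_def, filter_val] using
    congrArg (Multiset.countP (· < E)) hmap

theorem Matrix.notMem_spectrum_of_charpoly_eq_prod {K n : Type*} [Field K] [Fintype n]
    [DecidableEq n] {M : Matrix n n K} {μ : n → K} (h : M.charpoly = ∏ i, (X - C (μ i)))
    {z : K} (hz : ∀ i, z ≠ μ i) : z ∉ spectrum K M := by
  simpa only [mem_spectrum_iff_isRoot_charpoly, h, isRoot_prod, root_X_sub_C, mem_univ,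
    true_and, not_exists, eq_comm] using hz

theorem exp_mul_pow_toNat_emod {p : ℕ} (hp : p ≠ 0) {α : ℂ} {θ : ℝ} (hα : α ^ p = exp (θ * I))
    (n : ℤ) : exp (I * (θ * ((n / p : ℤ) : ℂ))) * α ^ ((n % p).toNat % p) = α ^ n := by
  have hα0 : α ≠ 0 := fun h => exp_ne_zero (θ * I) (by rw [← hα, h, zero_pow hp])
  have hrem : 0 ≤ n % p := Int.emod_nonneg n (by exact_mod_cast hp)
  have hrem_lt : (n % p).toNat < p := by
    have := Int.emod_lt_of_pos n (by omega : (0 : ℤ) < p)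
    omega
  calc exp (I * (θ * ((n / p : ℤ) : ℂ))) * α ^ ((n % p).toNat % p)
      = (α ^ p) ^ (n / p) * α ^ (n % p) := by
        rw [hα, ← exp_int_mul, Nat.mod_eq_of_lt hrem_lt, ← zpow_natCast, Int.toNat_of_nonneg hrem]
        ring_nf
    _ = α ^ n := by
        rw [← zpow_natCast, ← zpow_mul, ← zpow_add₀ hα0, Int.mul_ediv_add_emod]

def IsFloquetLaplacian (p q : ℕ) [NeZero p] [NeZero q] (θ φ : ℝ)
    (M : Matrix (Fin p × Fin q) (Fin p × Fin q) ℂ) : Prop :=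
  ∀ (ψ : Fin p × Fin q → ℂ) (ab : Fin p × Fin q),
    M.mulVec ψ ab =
      floquetExt p q θ φ ψ ((ab.1 : ℤ) - 1, (ab.2 : ℤ)) +
      floquetExt p q θ φ ψ ((ab.1 : ℤ) + 1, (ab.2 : ℤ)) +
      floquetExt p q θ φ ψ ((ab.1 : ℤ), (ab.2 : ℤ) - 1) +
      floquetExt p q θ φ ψ ((ab.1 : ℤ), (ab.2 : ℤ) + 1)

section Floquet

variable {p q : ℕ} [NeZero p] [NeZero q] {θ φ : ℝ}

theorem floquetExt_geometric {α β : ℂ} (hα : α ^ p = exp (θ * I)) (hβ : β ^ q = exp (φ * I))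
    (n m : ℤ) :
    floquetExt p q θ φ (fun ab => α ^ (ab.1 : ℕ) * β ^ (ab.2 : ℕ)) (n, m) = α ^ n * β ^ m := by
  rw [← exp_mul_pow_toNat_emod (NeZero.ne p) hα, ← exp_mul_pow_toNat_emod (NeZero.ne q) hβ,
    floquetExt, mul_add, exp_add]
  ring

variable {M : Matrix (Fin p × Fin q) (Fin p × Fin q) ℂ}

theorem IsFloquetLaplacian.mulVec_geometric (hM : IsFloquetLaplacian p q θ φ M) {α β : ℂ}
    (hα : α ^ p = exp (θ * I)) (hβ : β ^ q = exp (φ * I)) :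
    M *ᵥ (fun ab => α ^ (ab.1 : ℕ) * β ^ (ab.2 : ℕ)) =
      (α + α⁻¹ + (β + β⁻¹)) • fun ab => α ^ (ab.1 : ℕ) * β ^ (ab.2 : ℕ) := by
  have hα0 : α ≠ 0 := fun h => exp_ne_zero (θ * I) (by rw [← hα, h, zero_pow (NeZero.ne p)])
  have hβ0 : β ≠ 0 := fun h => exp_ne_zero (φ * I) (by rw [← hβ, h, zero_pow (NeZero.ne q)])
  ext ab
  simp only [hM _ ab, floquetExt_geometric hα hβ, zpow_sub_one₀ hα0, zpow_add_one₀ hα0,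
    zpow_sub_one₀ hβ0, zpow_add_one₀ hβ0, zpow_natCast, Pi.smul_apply, smul_eq_mul]
  ring

theorem IsFloquetLaplacian.charpoly_eq (hM : IsFloquetLaplacian p q θ φ M) {α : Fin p → ℂ}
    (hα_inj : Function.Injective α) (hα : ∀ k, α k ^ p = exp (θ * I)) {β : Fin q → ℂ}
    (hβ_inj : Function.Injective β) (hβ : ∀ l, β l ^ q = exp (φ * I)) :
    M.charpoly = ∏ kl : Fin p × Fin q,
      (X - C (α kl.1 + (α kl.1)⁻¹ + (β kl.2 + (β kl.2)⁻¹))) := by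
  set P := (Matrix.vandermonde α)ᵀ ⊗ₖ (Matrix.vandermonde β)ᵀ
  have hP : IsUnit P.det := by
    rw [isUnit_iff_ne_zero, Matrix.det_kronecker, Matrix.det_transpose, Matrix.det_transpose]
    exact mul_ne_zero (pow_ne_zero _ (Matrix.det_vandermonde_ne_zero_iff.2 hα_inj))
      (pow_ne_zero _ (Matrix.det_vandermonde_ne_zero_iff.2 hβ_inj))
  refine Matrix.charpoly_eq_prod_of_mul_eq_mul_diagonal hP ?_
  ext ab kl
  rw [Matrix.mul_diagonal]
  have hcol := congrFun (hM.mulVec_geometric (hα kl.1) (hβ kl.2)) ab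
  simpa [P, Matrix.mul_apply, Matrix.mulVec, dotProduct, mul_comm] using hcol

end Floquet

noncomputable def twoCos (r a : ℕ) : ℝ := 2 * Real.cos (Real.pi * a / r)

noncomputable def floquetRoot (r : ℕ) : ℂ := exp (2 * Real.pi * I / (2 * r : ℕ))

theorem twoCos_zero {r : ℕ} : twoCos r 0 = 2 := by simp [twoCos]

theorem floquetRoot_pow_add_inv {r : ℕ} (a : ℕ) :
    floquetRoot r ^ a + (floquetRoot r ^ a)⁻¹ = twoCos r a := by
  have harg : a * (2 * Real.pi * I / (2 * r : ℕ)) = (Real.pi * a / r : ℂ) * I := by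
    push_cast; field_simp
  rw [floquetRoot, ← exp_nat_mul, ← exp_neg, twoCos, ofReal_mul, ofReal_cos, ofReal_ofNat,
    two_cos, harg, neg_mul]
  push_cast; ring_nf

section Levels

variable {r : ℕ} [NeZero r]

theorem twoCos_eq_of_add_eq {a b : ℕ} (h : a + b = 2 * r) : twoCos r a = twoCos r b := by
  have hr : (r : ℝ) ≠ 0 := Nat.cast_ne_zero.2 (NeZero.ne r)
  have hab : (a : ℝ) = 2 * r - b := by rw [eq_sub_iff_add_eq]; exact_mod_cast h
  rw [twoCos, twoCos, hab, show Real.pi * (2 * r - b) / r = 2 * Real.pi - Real.pi * b / r by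
    field_simp, Real.cos_two_pi_sub]

theorem exists_twoCos_eq_of_le {a : ℕ} (ha : a ≤ 2 * r) : ∃ j ≤ r, twoCos r a = twoCos r j := by
  rcases le_total a r with h | h
  · exact ⟨a, h, rfl⟩
  · exact ⟨2 * r - a, by omega, twoCos_eq_of_add_eq (by omega)⟩

theorem twoCos_self : twoCos r r = -2 := by
  rw [twoCos, mul_div_assoc, div_self (Nat.cast_ne_zero.2 (NeZero.ne r)), mul_one, Real.cos_pi]
  norm_num

theorem isPrimitiveRoot_floquetRoot : IsPrimitiveRoot (floquetRoot r) (2 * r) :=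
  isPrimitiveRoot_exp _ (by have := NeZero.ne r; omega)

theorem floquetRoot_pow_pow_self (a : ℕ) : (floquetRoot r ^ a) ^ r = (-1) ^ a := by
  have hr : (r : ℂ) ≠ 0 := Nat.cast_ne_zero.2 (NeZero.ne r)
  rw [← pow_mul, mul_comm, pow_mul, floquetRoot, ← exp_nat_mul,
    show (r : ℂ) * (2 * Real.pi * I / (2 * r : ℕ)) = Real.pi * I by push_cast; field_simp,
    exp_pi_mul_I]

end Levels

/-- `σ = 0` gives the periodic (`θ = 0`) and `σ = 1` the antiperiodic (`θ = π`) spectrum. -/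
noncomputable def floquetEigenvalue (r σ : ℕ) (kl : Fin r × Fin r) : ℝ :=
  twoCos r (2 * kl.1 + σ) + twoCos r (2 * kl.2 + σ)

section Eigenvalues

variable {r : ℕ} [NeZero r]

theorem IsFloquetLaplacian.charpoly_eq_prod_floquetEigenvalue
    {M : Matrix (Fin r × Fin r) (Fin r × Fin r) ℂ} {σ : ℕ} (hσ : σ ≤ 1) {θ : ℝ}
    (hθ : exp (θ * I) = (-1) ^ σ) (hM : IsFloquetLaplacian r r θ θ M) :
    M.charpoly = ∏ kl, (X - C (floquetEigenvalue r σ kl : ℂ)) := by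
  have hinj : Function.Injective fun k : Fin r => floquetRoot r ^ (2 * k + σ : ℕ) := by
    intro k k' h
    have := isPrimitiveRoot_floquetRoot.pow_inj (by omega) (by omega) h
    omega
  have hpow (k : Fin r) : (floquetRoot r ^ (2 * k + σ : ℕ)) ^ r = exp (θ * I) := by
    rw [floquetRoot_pow_pow_self, hθ, pow_add, pow_mul, neg_one_sq, one_pow, one_mul]
  simp only [hM.charpoly_eq hinj hpow hinj hpow, floquetRoot_pow_add_inv, floquetEigenvalue,
    ofReal_add]

theorem floquetEigenvalue_mem {σ : ℕ} (hσ : σ ≤ 1) (kl : Fin r × Fin r) :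
    floquetEigenvalue r σ kl ∈ {x : ℝ | ∃ a ∈ {y : ℝ | ∃ j ≤ r, y = twoCos r j},
      ∃ b ∈ {y : ℝ | ∃ j ≤ r, y = twoCos r j}, x = a + b} := by
  obtain ⟨j, hj, hj_eq⟩ := exists_twoCos_eq_of_le (r := r) (a := 2 * kl.1 + σ) (by omega)
  obtain ⟨j', hj', hj'_eq⟩ := exists_twoCos_eq_of_le (r := r) (a := 2 * kl.2 + σ) (by omega)
  exact ⟨_, ⟨j, hj, rfl⟩, _, ⟨j', hj', rfl⟩, by rw [floquetEigenvalue, hj_eq, hj'_eq]⟩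

theorem floquetEigenvalue_one_rev (kl : Fin r × Fin r) :
    floquetEigenvalue r 1 (kl.1.rev, kl.2.rev) = floquetEigenvalue r 1 kl := by
  have hrev (k : Fin r) : twoCos r (2 * k.rev + 1) = twoCos r (2 * k + 1) :=
    twoCos_eq_of_add_eq (by rw [Fin.val_rev]; omega)
  simp only [floquetEigenvalue, hrev]

theorem floquetEigenvalue_zero_neg (kl : Fin r × Fin r) :
    floquetEigenvalue r 0 (-kl.1, -kl.2) = floquetEigenvalue r 0 kl := by
  have hneg (k : Fin r) : twoCos r (2 * (-k : Fin r) + 0) = twoCos r (2 * k + 0) := by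
    rcases eq_or_ne k 0 with rfl | hk
    · rw [neg_zero]
    · exact twoCos_eq_of_add_eq (by rw [Fin.val_neg, if_neg hk]; omega)
  simp only [floquetEigenvalue, hneg]

theorem even_card_floquetEigenvalue_one_lt (hr : Even r) (E : ℝ) :
    Even #{kl : Fin r × Fin r | floquetEigenvalue r 1 kl < E} := by
  have hinv : Function.Involutive fun kl : Fin r × Fin r => (kl.1.rev, kl.2.rev) :=
    fun kl => by simp
  rw [even_card_iff_even_card_filter_eq_self hinv (by simp [floquetEigenvalue_one_rev]),
    filter_eq_empty_iff.2 fun kl _ hfix => ?_, card_empty]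
  · exact Even.zero
  have := congrArg (fun kl => (kl.1 : ℕ)) hfix
  simp only [Fin.val_rev] at this
  obtain ⟨m, hm⟩ := hr
  omega

theorem Fin.neg_eq_self_iff_of_even (hr : Even r) (k : Fin r) :
    -k = k ↔ k = 0 ∨ (k : ℕ) = r / 2 := by
  rcases eq_or_ne k 0 with rfl | hk
  · simp
  · rw [Fin.ext_iff, Fin.val_neg, if_neg hk, or_iff_right hk]
    have := Fin.val_ne_zero_iff.2 hk
    obtain ⟨m, hm⟩ := hr
    omega

theorem odd_card_floquetEigenvalue_zero_lt (hr : Even r) {E : ℝ}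
    (hE : E ∈ Set.Ioo (-4 : ℝ) 4) :
    Odd #{kl : Fin r × Fin r | floquetEigenvalue r 0 kl < E} := by
  have hr0 := NeZero.ne r
  let half : Fin r := ⟨r / 2, by omega⟩
  have hhalf : half ≠ 0 := fun h => by
    have := congrArg Fin.val h
    simp only [half, Fin.val_zero] at this
    obtain ⟨m, hm⟩ := hr
    omega
  have hinv : Function.Involutive fun kl : Fin r × Fin r => (-kl.1, -kl.2) := fun kl => by simp
  have hfix : ({kl ∈ {kl | floquetEigenvalue r 0 kl < E} | (-kl.1, -kl.2) = kl} :
      Finset (Fin r × Fin r)) =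
      ({kl ∈ {0, half} ×ˢ {0, half} | floquetEigenvalue r 0 kl < E} : Finset _) := by
    ext kl
    simp only [mem_filter, mem_univ, true_and, mem_product, mem_insert, mem_singleton,
      Prod.ext_iff, Fin.neg_eq_self_iff_of_even hr, Fin.ext_iff (b := half), half]
    tauto
  have h0 : twoCos r (2 * (0 : Fin r) + 0) = 2 := twoCos_zero
  have hh : twoCos r (2 * half + 0) = -2 := by
    rw [show 2 * (half : ℕ) + 0 = r by obtain ⟨m, hm⟩ := hr; simp only [half]; omega, twoCos_self]
  rw [← Nat.not_even_iff_odd, even_card_iff_even_card_filter_eq_self hinv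
    (by simp [floquetEigenvalue_zero_neg]), hfix, card_filter, sum_product,
    sum_pair hhalf.symm, sum_pair hhalf.symm, sum_pair hhalf.symm]
  have h4 : ¬(2 + 2 : ℝ) < E := by linarith [hE.2]
  have hm4 : (-2 + -2 : ℝ) < E := by linarith [hE.1]
  simp only [floquetEigenvalue, h0, hh, if_neg h4, if_pos hm4, add_neg_cancel, neg_add_cancel]
  split_ifs <;> decide

end Eigenvalues

open Polynomial in
/-- for even r, Γ = {0,…,r−1}², and E ∈ (−4,4) outside the exceptional
set C_Γ = C_r + C_r, the number of eigenvalues (with multiplicity) of Δ_{0,0}^Γ below E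
is odd, the number of eigenvalues (with multiplicity) of Δ_{π,π}^Γ below E is even, the
two counts differ, and E is an eigenvalue of neither matrix.  Eigenvalues with
multiplicity are encoded as enumerations `lam00`, `lampp` factoring the characteristic
polynomials. -/
theorem free_laplacian_eigenvalue_counts
    (r : ℕ) [NeZero r] (hr : Even r)
    (M00 Mpp : Matrix (Fin r × Fin r) (Fin r × Fin r) ℂ)
    (hM00 : ∀ (ψ : Fin r × Fin r → ℂ) (ab : Fin r × Fin r),
      M00.mulVec ψ ab =
        floquetExt r r 0 0 ψ ((ab.1 : ℤ) - 1, (ab.2 : ℤ)) +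
        floquetExt r r 0 0 ψ ((ab.1 : ℤ) + 1, (ab.2 : ℤ)) +
        floquetExt r r 0 0 ψ ((ab.1 : ℤ), (ab.2 : ℤ) - 1) +
        floquetExt r r 0 0 ψ ((ab.1 : ℤ), (ab.2 : ℤ) + 1))
    (hMpp : ∀ (ψ : Fin r × Fin r → ℂ) (ab : Fin r × Fin r),
      Mpp.mulVec ψ ab =
        floquetExt r r Real.pi Real.pi ψ ((ab.1 : ℤ) - 1, (ab.2 : ℤ)) +
        floquetExt r r Real.pi Real.pi ψ ((ab.1 : ℤ) + 1, (ab.2 : ℤ)) +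
        floquetExt r r Real.pi Real.pi ψ ((ab.1 : ℤ), (ab.2 : ℤ) - 1) +
        floquetExt r r Real.pi Real.pi ψ ((ab.1 : ℤ), (ab.2 : ℤ) + 1))
    (lam00 lampp : Fin (r * r) → ℝ)
    (hcp00 : M00.charpoly = ∏ j : Fin (r * r), (X - C ((lam00 j : ℝ) : ℂ)))
    (hcppp : Mpp.charpoly = ∏ j : Fin (r * r), (X - C ((lampp j : ℝ) : ℂ)))
    (E : ℝ) (hE : E ∈ Set.Ioo (-4 : ℝ) 4)
    (hEexc : E ∉ {x : ℝ | ∃ a ∈ {y : ℝ | ∃ j : ℕ, j ≤ r ∧ y = 2 * Real.cos (Real.pi * j / r)},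
      ∃ b ∈ {y : ℝ | ∃ j : ℕ, j ≤ r ∧ y = 2 * Real.cos (Real.pi * j / r)}, x = a + b}) :
    Odd (Finset.univ.filter fun j : Fin (r * r) => lam00 j < E).card ∧
    Even (Finset.univ.filter fun j : Fin (r * r) => lampp j < E).card ∧
    (Finset.univ.filter fun j : Fin (r * r) => lam00 j < E).card ≠
      (Finset.univ.filter fun j : Fin (r * r) => lampp j < E).card ∧
    (E : ℂ) ∉ spectrum ℂ M00 ∧ (E : ℂ) ∉ spectrum ℂ Mpp := by
  have h00 := IsFloquetLaplacian.charpoly_eq_prod_floquetEigenvalue zero_le_one (by simp) hM00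
  have hpp := IsFloquetLaplacian.charpoly_eq_prod_floquetEigenvalue le_rfl
    (by simp [exp_pi_mul_I]) hMpp
  have hodd : Odd #{j | lam00 j < E} := by
    rw [card_filter_lt_eq_of_prod_X_sub_C_eq (hcp00.symm.trans h00)]
    exact odd_card_floquetEigenvalue_zero_lt hr hE
  have heven : Even #{j | lampp j < E} := by
    rw [card_filter_lt_eq_of_prod_X_sub_C_eq (hcppp.symm.trans hpp)]
    exact even_card_floquetEigenvalue_one_lt hr E
  have hE_ne {σ : ℕ} (hσ : σ ≤ 1) (kl : Fin r × Fin r) : (E : ℂ) ≠ floquetEigenvalue r σ kl :=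
    fun h => hEexc (ofReal_injective h ▸ floquetEigenvalue_mem hσ kl)
  exact ⟨hodd, heven, fun h => Nat.not_even_iff_odd.2 hodd (h ▸ heven),
    Matrix.notMem_spectrum_of_charpoly_eq_prod h00 (hE_ne zero_le_one),
    Matrix.notMem_spectrum_of_charpoly_eq_prod hpp (hE_ne le_rfl)⟩
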